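/- arXiv:2512.03576 — 7 statements merged into one kernel-verified Lean document; each statement's English description precedes it below -/
import Mathlib

section
/- Let X be a left-continuous compact Hausdorff semigroup and let L be a left ideal of X. Then every right ideal R of X contains a right ideal of the form u * X, where u ∈ L is an idempotent; in particular, every right ideal contains a principal right ideal generated by an idempotent lying in L. -/
open Pointwise

variable {X : Type*}

/-- A left ideal of a semigroup: a nonempty subset `I` with `X * I ⊆ I`. -/
def IsLeftIdeal [Mul X] (I : Set X) : Prop :=
  I.Nonempty ∧ ∀ x : X, ∀ i ∈ I, x * i ∈ I

/-- A right ideal of a semigroup: a nonempty subset `R` with `R * X ⊆ R`. -/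
def IsRightIdeal [Mul X] (R : Set X) : Prop :=
  R.Nonempty ∧ ∀ r ∈ R, ∀ x : X, r * x ∈ R

/-- A two-sided ideal of a semigroup. -/
def IsSemigroupIdeal [Mul X] (I : Set X) : Prop :=
  IsLeftIdeal I ∧ IsRightIdeal I

/-- A minimal left ideal: a left ideal containing no proper left subideal. -/
def IsMinLeftIdeal [Mul X] (I : Set X) : Prop :=
  IsLeftIdeal I ∧ ∀ J ⊆ I, IsLeftIdeal J → J = I

/-- A minimal right ideal: a right ideal containing no proper right subideal. -/
def IsMinRightIdeal [Mul X] (R : Set X) : Prop :=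
  IsRightIdeal R ∧ ∀ S ⊆ R, IsRightIdeal S → S = R

/-- A minimal two-sided ideal. -/
def IsMinSemigroupIdeal [Mul X] (I : Set X) : Prop :=
  IsSemigroupIdeal I ∧ ∀ J ⊆ I, IsSemigroupIdeal J → J = I

/-- Zorn's lemma for families of nonempty closed subsets of a compact space,
closed under intersections of chains. -/
theorem min_closed_aux [TopologicalSpace X] [CompactSpace X]
    (C : Set (Set X)) (hne : ∀ T ∈ C, T.Nonempty) (hcl : ∀ T ∈ C, IsClosed T)
    (hmem : ∀ c ⊆ C, IsChain (· ⊆ ·) c → c.Nonempty → (⋂₀ c).Nonempty → ⋂₀ c ∈ C)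
    (S : Set X) (hS : S ∈ C) : ∃ M, M ⊆ S ∧ Minimal (· ∈ C) M := by
  refine zorn_superset_nonempty C (fun c hcC hchain hcne => ?_) S hS
  have : Nonempty c := hcne.to_subtype
  have hint : (⋂₀ c).Nonempty :=
    IsCompact.nonempty_sInter_of_directed_nonempty_isCompact_isClosed
      (fun U hU V hV => (hchain.total hU hV).elim
        (fun h => ⟨U, hU, subset_rfl, h⟩) (fun h => ⟨V, hV, h, subset_rfl⟩))
      (fun U hU => hne U (hcC hU))
      (fun U hU => (hcl U (hcC hU)).isCompact) (fun U hU => hcl U (hcC hU))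
  exact ⟨⋂₀ c, hmem c hcC hchain hcne hint, fun s hs => Set.sInter_subset_of_mem hs⟩

/-- Ellis' idempotent lemma. -/
theorem ellis_idem [Semigroup X] [TopologicalSpace X] [CompactSpace X] [T2Space X]
    (hX : ∀ a : X, Continuous fun x : X => x * a)
    (S : Set X) (hSne : S.Nonempty) (hScl : IsClosed S)
    (hSmul : ∀ a ∈ S, ∀ b ∈ S, a * b ∈ S) : ∃ u ∈ S, u * u = u := by
  set C : Set (Set X) := {T | T ⊆ S ∧ T.Nonempty ∧ IsClosed T ∧ ∀ a ∈ T, ∀ b ∈ T, a * b ∈ T}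
    with hC
  obtain ⟨M, -, hM, hMmin⟩ := min_closed_aux C (fun T hT => hT.2.1) (fun T hT => hT.2.2.1)
    (fun c hcC hchain hcne hint =>
      ⟨(Set.sInter_subset_of_mem hcne.choose_spec).trans (hcC hcne.choose_spec).1, hint,
        isClosed_sInter fun U hU => (hcC hU).2.2.1,
        fun a ha b hb U hU => (hcC hU).2.2.2 a (ha U hU) b (hb U hU)⟩)
    S ⟨subset_rfl, hSne, hScl, hSmul⟩
  obtain ⟨hMS, hMne, hMcl, hMmul⟩ := hM
  obtain ⟨s, hs⟩ := hMne
  have hMcompact : IsCompact M := hMcl.isCompact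
  -- M * s = M
  have hMs : (fun x => x * s) '' M ∈ C := by
    refine ⟨?_, ⟨s * s, s, hs, rfl⟩, (hMcompact.image (hX s)).isClosed, ?_⟩
    · rintro _ ⟨a, ha, rfl⟩; exact hMS (hMmul a ha s hs)
    · rintro _ ⟨a, ha, rfl⟩ _ ⟨b, hb, rfl⟩
      exact ⟨a * s * b, hMmul _ (hMmul a ha s hs) b hb, mul_assoc (a * s) b s⟩
  have hsub : (fun x => x * s) '' M ⊆ M := by
    rintro _ ⟨a, ha, rfl⟩; exact hMmul a ha s hs
  have hMeq : M ⊆ (fun x => x * s) '' M := hMmin hMs hsub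
  obtain ⟨t, ht, hts⟩ := hMeq hs
  -- T = {x ∈ M | x * s = s}
  have hT : {x ∈ M | x * s = s} ∈ C := by
    refine ⟨fun x hx => hMS hx.1, ⟨t, ht, hts⟩,
      hMcl.inter ((isClosed_singleton.preimage (hX s))), ?_⟩
    rintro a ⟨ha, has⟩ b ⟨hb, hbs⟩
    exact ⟨hMmul a ha b hb, by rw [mul_assoc, hbs, has]⟩
  have hsT := hMmin hT (fun x hx => hx.1)
  exact ⟨s, hMS hs, (hsT hs).2⟩

/-- Every right ideal of a left-continuous compact Hausdorff semigroup contains a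
principal right ideal `u * X` generated by an idempotent `u` lying in a given left ideal `L`. -/
theorem stmt0 [Semigroup X] [TopologicalSpace X] [CompactSpace X] [T2Space X]
    (hX : ∀ a : X, Continuous fun x : X => x * a)
    (L : Set X) (hL : IsLeftIdeal L) (R : Set X) (hR : IsRightIdeal R) :
    ∃ u ∈ L, u * u = u ∧ IsRightIdeal ({u} * (Set.univ : Set X)) ∧
      {u} * (Set.univ : Set X) ⊆ R := by
  obtain ⟨ℓ, hℓ⟩ := hL.1
  obtain ⟨r, hr⟩ := hR.1
  set C : Set (Set X) :=
    {I | I ⊆ L ∧ I.Nonempty ∧ IsClosed I ∧ ∀ x : X, ∀ i ∈ I, x * i ∈ I} with hC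
  have hXl : (fun x => x * ℓ) '' Set.univ ∈ C := by
    refine ⟨?_, ⟨ℓ * ℓ, ℓ, trivial, rfl⟩,
      (isCompact_univ.image (hX ℓ)).isClosed, ?_⟩
    · rintro _ ⟨x, -, rfl⟩; exact hL.2 x ℓ hℓ
    · rintro x _ ⟨y, -, rfl⟩; exact ⟨x * y, trivial, mul_assoc x y ℓ⟩
  obtain ⟨I, -, hI, hImin⟩ := min_closed_aux C (fun T hT => hT.2.1) (fun T hT => hT.2.2.1)
    (fun c hcC hchain hcne hint =>
      ⟨(Set.sInter_subset_of_mem hcne.choose_spec).trans (hcC hcne.choose_spec).1, hint,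
        isClosed_sInter fun U hU => (hcC hU).2.2.1,
        fun x a ha U hU => (hcC hU).2.2.2 x a (ha U hU)⟩)
    _ hXl
  obtain ⟨hIL, hIne, hIcl, hImul⟩ := hI
  -- key fact: for a ∈ I, I ⊆ I * a
  have key : ∀ a ∈ I, I ⊆ (fun x => x * a) '' I := by
    intro a ha
    refine hImin ⟨?_, hIne.image _, (hIcl.isCompact.image (hX a)).isClosed, ?_⟩ ?_
    · rintro _ ⟨i, hi, rfl⟩; exact hIL (hImul i a ha)
    · rintro x _ ⟨i, hi, rfl⟩; exact ⟨x * i, hImul x i hi, mul_assoc x i a⟩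
    · rintro _ ⟨i, hi, rfl⟩; exact hImul i a ha
  obtain ⟨ℓ₀, hℓ₀⟩ := hIne
  set p := r * ℓ₀ with hp
  have hpI : p ∈ I := hImul r ℓ₀ hℓ₀
  have hpR : p ∈ R := hR.2 r hr ℓ₀
  obtain ⟨t, htI, htp⟩ := key p hpI hpI
  -- idempotent u ∈ I with u * p = p
  obtain ⟨u, ⟨huI, hup⟩, huu⟩ := ellis_idem hX {x ∈ I | x * p = p} ⟨t, htI, htp⟩
    (hIcl.inter (isClosed_singleton.preimage (hX p)))
    (fun a ha b hb => ⟨hImul a b hb.1, by rw [mul_assoc, hb.2, ha.2]⟩)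
  obtain ⟨q₀, hq₀I, hq₀p⟩ := key p hpI huI
  set q := u * q₀ with hq
  have hqI : q ∈ I := hImul u q₀ hq₀I
  have hq₀p' : q₀ * p = u := hq₀p
  have hqp : q * p = u := by rw [hq, mul_assoc, hq₀p', huu]
  have huq : u * q = q := by rw [hq, ← mul_assoc, huu]
  refine ⟨p * q, hIL (hImul p q hqI), ?_, ⟨⟨p * q * (p * q), ?_⟩, ?_⟩, ?_⟩
  · rw [mul_assoc, ← mul_assoc q p, hqp, huq]
  · exact Set.mul_mem_mul (Set.mem_singleton _) trivial
  · rintro _ ⟨a, ha, b, -, rfl⟩ x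
    rw [Set.mem_singleton_iff] at ha; subst ha
    exact Set.mem_mul.2 ⟨_, Set.mem_singleton _, b * x, trivial, (mul_assoc _ b x).symm⟩
  · rintro _ ⟨a, ha, b, -, rfl⟩
    rw [Set.mem_singleton_iff] at ha; subst ha
    exact hR.2 _ (hR.2 p hpR q) b
end

section
/- Let X be a left-continuous compact Hausdorff semigroup and let u be a minimal idempotent of X (an idempotent belonging to some minimal left ideal). Then u * X is a minimal right ideal of X. -/
open Pointwise

variable {X : Type*}

/-- In a minimal left ideal containing an idempotent `u`, every element `w ∈ I`
has a "left inverse" of the form `u * y` with `y ∈ I`. -/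
lemma exists_leftInv [Semigroup X] {I : Set X} (hI : IsMinLeftIdeal I)
    {u w : X} (hu : u * u = u) (huI : u ∈ I) (hwI : w ∈ I) :
    ∃ y ∈ I, (u * y) * w = u := by
  have hJ : IsLeftIdeal {t | ∃ i ∈ I, i * w = t} := by
    refine ⟨⟨u * w, u, huI, rfl⟩, ?_⟩
    rintro x t ⟨i, hi, rfl⟩
    exact ⟨x * i, hI.1.2 x i hi, mul_assoc x i w⟩
  have hsub : {t | ∃ i ∈ I, i * w = t} ⊆ I := by
    rintro t ⟨i, hi, rfl⟩; exact hI.1.2 i w hwI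
  have heq := hI.2 _ hsub hJ
  have huIw : u ∈ {t | ∃ i ∈ I, i * w = t} := heq.symm ▸ huI
  obtain ⟨y, hyI, hyw⟩ := huIw
  refine ⟨y, hyI, ?_⟩
  rw [mul_assoc, hyw, hu]

/-- If `u` is a minimal idempotent (an idempotent lying in some minimal left ideal),
then `u * X` is a minimal right ideal. -/
theorem stmt2 [Semigroup X] [TopologicalSpace X] [CompactSpace X] [T2Space X]
    (hX : ∀ a : X, Continuous fun x : X => x * a)
    (u : X) (hu : u * u = u) (I : Set X) (hI : IsMinLeftIdeal I) (huI : u ∈ I) :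
    IsMinRightIdeal ({u} * (Set.univ : Set X)) := by
  have hmem : ∀ a : X, a ∈ ({u} * (Set.univ : Set X)) ↔ ∃ x, u * x = a := by
    intro a; simp [Set.mem_mul]
  have hR : IsRightIdeal ({u} * (Set.univ : Set X)) := by
    refine ⟨⟨u, (hmem u).2 ⟨u, hu⟩⟩, ?_⟩
    intro r hr x
    obtain ⟨y, hy⟩ := (hmem r).1 hr
    exact (hmem _).2 ⟨y * x, by rw [← hy, mul_assoc]⟩
  refine ⟨hR, ?_⟩
  intro S hS hSR
  obtain ⟨s, hsS⟩ := hSR.1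
  obtain ⟨x₀, hx₀⟩ := (hmem s).1 (hS hsS)
  have hus : u * s = s := by rw [← hx₀, ← mul_assoc, hu]
  set w := s * u with hw
  have hwS : w ∈ S := hSR.2 s hsS u
  have hwI : w ∈ I := by
    have h1 : x₀ * u ∈ I := hI.1.2 x₀ u huI
    have h2 := hI.1.2 u _ h1
    rwa [← mul_assoc, hx₀] at h2
  obtain ⟨y, hyI, hyw⟩ := exists_leftInv hI hu huI hwI
  have hw''I : u * y ∈ I := hI.1.2 u y hyI
  obtain ⟨z, hzI, hzw⟩ := exists_leftInv hI hu huI hw''I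
  have huw'' : u * (u * y) = u * y := by rw [← mul_assoc, hu]
  have huw : u * w = w := by rw [hw, ← mul_assoc, hus]
  have key : w * (u * y) = u := by
    have h2 : (u * y) * (w * (u * y)) = u * y := by
      rw [← mul_assoc, hyw, huw'']
    have h1 : (u * z) * ((u * y) * (w * (u * y))) = w * (u * y) :=
      calc (u * z) * ((u * y) * (w * (u * y)))
          = ((u * z) * (u * y)) * (w * (u * y)) := (mul_assoc ..).symm
        _ = u * (w * (u * y)) := by rw [hzw]
        _ = (u * w) * (u * y) := (mul_assoc ..).symm
        _ = w * (u * y) := by rw [huw]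
    rw [h2] at h1
    rw [← h1, hzw]
  have hu_eq : s * (u * (u * y)) = u :=
    calc s * (u * (u * y)) = (s * u) * (u * y) := (mul_assoc s u (u * y)).symm
      _ = u := key
  apply Set.Subset.antisymm hS
  intro a ha
  obtain ⟨x, hx⟩ := (hmem a).1 ha
  have hmemS : s * ((u * (u * y)) * x) ∈ S := hSR.2 s hsS _
  rwa [← mul_assoc, hu_eq, hx] at hmemS
end

section
/- Let X be a left-continuous compact Hausdorff semigroup. Then every right ideal of X contains a minimal right ideal. -/
open Pointwise

variable {X : Type*}

/-- Every right ideal of a left-continuous compact Hausdorff semigroup contains a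
minimal right ideal. -/
theorem stmt3 [Semigroup X] [TopologicalSpace X] [CompactSpace X] [T2Space X]
    (hX : ∀ a : X, Continuous fun x : X => x * a)
    (R : Set X) (hR : IsRightIdeal R) :
    ∃ S ⊆ R, IsMinRightIdeal S := by
  obtain ⟨r, hrR⟩ := hR.1
  haveI : Nonempty X := ⟨r⟩
  -- the collection of closed left ideals
  set 𝒮 : Set (Set X) := {I | IsClosed I ∧ IsLeftIdeal I} with h𝒮
  have hXS : (Set.univ : Set X) ∈ 𝒮 :=
    ⟨isClosed_univ, ⟨r, trivial⟩, fun _ _ _ => trivial⟩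
  have hchain : ∀ c ⊆ 𝒮, IsChain (· ⊆ ·) c → c.Nonempty →
      ∃ lb ∈ 𝒮, ∀ s ∈ c, lb ⊆ s := by
    intro c hcS hc hcne
    refine ⟨⋂₀ c, ⟨isClosed_sInter fun t ht => (hcS ht).1, ?_, ?_⟩,
      fun s hs => Set.sInter_subset_of_mem hs⟩
    · haveI : Nonempty c := hcne.to_subtype
      have hdir : DirectedOn (· ⊇ ·) c := fun a ha b hb =>
        (hc.total ha hb).elim (fun h => ⟨a, ha, Set.Subset.rfl, h⟩)
          (fun h => ⟨b, hb, h, Set.Subset.rfl⟩)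
      exact IsCompact.nonempty_sInter_of_directed_nonempty_isCompact_isClosed
        hdir (fun U hU => (hcS hU).2.1)
        (fun U hU => (hcS hU).1.isCompact) (fun U hU => (hcS hU).1)
    · intro x i hi
      rw [Set.mem_sInter] at hi ⊢
      exact fun t ht => (hcS ht).2.2 x i (hi t ht)
  obtain ⟨M, -, hMmin⟩ := zorn_superset_nonempty 𝒮 hchain Set.univ hXS
  obtain ⟨Mcl, Mne, Mmul⟩ : IsClosed M ∧ IsLeftIdeal M := hMmin.prop
  -- `M` is minimal among all left ideals
  have Mminimal : ∀ J ⊆ M, IsLeftIdeal J → J = M := by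
    intro J hJM hJ
    obtain ⟨j, hj⟩ := hJ.1
    set Xj : Set X := Set.range (fun x : X => x * j) with hXj
    have hXjS : Xj ∈ 𝒮 := by
      refine ⟨?_, ⟨j * j, j, rfl⟩, ?_⟩
      · have : Xj = (fun x : X => x * j) '' Set.univ := by
          rw [Set.image_univ]
        rw [this]
        exact ((hX j).isClosedMap _ isClosed_univ)
      · rintro x _ ⟨y, rfl⟩
        exact ⟨x * y, by simp [mul_assoc]⟩
    have hXjM : Xj ⊆ M := by
      rintro _ ⟨y, rfl⟩
      exact Mmul y j (hJM hj)
    have hXjJ : Xj ⊆ J := by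
      rintro _ ⟨y, rfl⟩
      exact hJ.2 y j hj
    have : Xj = M := hMmin.eq_of_subset hXjS hXjM
    exact le_antisymm hJM (this ▸ hXjJ)
  -- an idempotent in `M`
  obtain ⟨e, heM, he⟩ : ∃ e ∈ M, e * e = e :=
    exists_idempotent_in_compact_subsemigroup hX M Mne Mcl.isCompact
      (fun x _ y hy => Mmul x y hy)
  -- `M = X * e`
  have hMXe : M = Set.range (fun x : X => x * e) := by
    refine (Mminimal _ ?_ ⟨Set.range_nonempty _, ?_⟩).symm
    · rintro _ ⟨y, rfl⟩; exact Mmul y e heM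
    · rintro x _ ⟨y, rfl⟩; exact ⟨x * y, by simp [mul_assoc]⟩
  -- inverses: any `s ∈ M` with `e * s = s` has a "right-ish" inverse in `eXe`
  have inv : ∀ s ∈ M, e * s = s → ∃ s', s' ∈ M ∧ e * s' = s' ∧ s' * s = e := by
    intro s hsM hes
    -- `X * s` is a left ideal inside `M`, hence equals `M`, so `e ∈ X * s`
    have hXs : Set.range (fun x : X => x * s) = M := by
      refine Mminimal _ ?_ ⟨Set.range_nonempty _, ?_⟩
      · rintro _ ⟨y, rfl⟩; exact Mmul y s hsM
      · rintro x _ ⟨y, rfl⟩; exact ⟨x * y, by simp [mul_assoc]⟩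
    obtain ⟨y, hy⟩ : ∃ y, y * s = e := by
      have : e ∈ Set.range (fun x : X => x * s) := hXs ▸ heM
      exact this
    refine ⟨e * (y * e), ?_, ?_, ?_⟩
    · rw [← mul_assoc]; exact Mmul (e * y) e heM
    · rw [← mul_assoc, he]
    · calc (e * (y * e)) * s = e * (y * (e * s)) := by simp [mul_assoc]
        _ = e * (y * s) := by rw [hes]
        _ = e := by rw [hy, he]
  -- `e * X` is a minimal right ideal
  set eS : Set X := Set.range (fun x : X => e * x) with heS
  have heSe : e ∈ eS := ⟨e, he⟩
  have heSright : IsRightIdeal eS := by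
    refine ⟨⟨e, heSe⟩, ?_⟩
    rintro _ ⟨y, rfl⟩ x
    exact ⟨y * x, by simp [mul_assoc]⟩
  have heSmin : IsMinRightIdeal eS := by
    refine ⟨heSright, fun T hTsub hT => ?_⟩
    obtain ⟨t, htT⟩ := hT.1
    obtain ⟨x, hx⟩ : ∃ x, e * x = t := hTsub htT
    have het : e * t = t := by rw [← hx, ← mul_assoc, he]
    set s : X := t * e with hs
    have hsM : s ∈ M := by rw [hMXe]; exact ⟨t, rfl⟩
    have hes : e * s = s := by rw [hs, ← mul_assoc, het]
    obtain ⟨s', hs'M, hes', hs's⟩ := inv s hsM hes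
    -- `s'` itself has a left inverse `s''`
    obtain ⟨s'', _, _, hs''s'⟩ := inv s' hs'M hes'
    -- hence `s * s' = e`
    have hss' : s * s' = e := by
      calc s * s' = (e * s) * s' := by rw [hes]
        _ = ((s'' * s') * s) * s' := by rw [hs''s']
        _ = s'' * ((s' * s) * s') := by simp [mul_assoc]
        _ = s'' * (e * s') := by rw [hs's]
        _ = s'' * s' := by rw [hes']
        _ = e := hs''s'
    -- therefore `e ∈ T`
    have heT : e ∈ T := by
      have : t * (e * s') = e := by rw [← mul_assoc, ← hs, hss']
      have := hT.2 t htT (e * s')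
      rwa [← mul_assoc, ← hs, hss'] at this
    apply le_antisymm hTsub
    rintro _ ⟨y, rfl⟩
    exact hT.2 e heT y
  -- translate: `r * (e * X)` is a minimal right ideal inside `R`
  refine ⟨(fun m => r * m) '' eS, ?_, ?_, ?_⟩
  · rintro _ ⟨m, _, rfl⟩
    exact hR.2 r hrR m
  · constructor
    · exact ⟨r * e, e, heSe, rfl⟩
    · rintro _ ⟨m, hm, rfl⟩ x
      exact ⟨m * x, heSright.2 m hm x, by simp [mul_assoc]⟩
  · intro T hTsub hT
    set T' : Set X := {m ∈ eS | r * m ∈ T} with hT'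
    have hT'id : IsRightIdeal T' := by
      constructor
      · obtain ⟨t, htT⟩ := hT.1
        obtain ⟨m, hm, rfl⟩ := hTsub htT
        exact ⟨m, hm, htT⟩
      · rintro m ⟨hm1, hm2⟩ x
        exact ⟨heSright.2 m hm1 x, by rw [← mul_assoc]; exact hT.2 _ hm2 x⟩
    have hT'sub : T' ⊆ eS := fun m hm => hm.1
    have : T' = eS := heSmin.2 T' hT'sub hT'id
    apply le_antisymm hTsub
    rintro _ ⟨m, hm, rfl⟩
    have : m ∈ T' := this ▸ hm
    exact this.2
end

section
/- Let X be a nonempty left-continuous compact Hausdorff semigroup. Then the union I of all minimal left ideals of X is a two-sided ideal of X which is contained in every two-sided ideal of X (so I is the minimal two-sided ideal), and I also equals the union of all minimal right ideals of X. -/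
open Pointwise

variable {X : Type*}

section Aux

variable [Semigroup X] [TopologicalSpace X] [CompactSpace X] [T2Space X]

/-- `X * a` is a left ideal. -/
lemma range_isLeftIdeal (a : X) : IsLeftIdeal (Set.range (· * a)) := by
  refine ⟨⟨a * a, a, rfl⟩, ?_⟩
  rintro x _ ⟨y, rfl⟩
  exact ⟨x * y, mul_assoc x y a⟩

/-- Every left ideal contains a minimal left ideal. -/
lemma exists_minLeftIdeal_subset (hX : ∀ a : X, Continuous fun x : X => x * a)
    {I : Set X} (hI : IsLeftIdeal I) : ∃ L ⊆ I, IsMinLeftIdeal L := by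
  obtain ⟨a, ha⟩ := hI.1
  set S : Set (Set X) := {J | J ⊆ I ∧ IsLeftIdeal J ∧ IsClosed J} with hS
  have hrange : ∀ b ∈ I, Set.range (· * b) ∈ S := by
    intro b hb
    refine ⟨?_, range_isLeftIdeal b, (isCompact_range (hX b)).isClosed⟩
    rintro _ ⟨x, rfl⟩; exact hI.2 x b hb
  have hchain : ∀ c ⊆ S, IsChain (· ⊆ ·) c → c.Nonempty →
      ∃ lb ∈ S, ∀ s ∈ c, lb ⊆ s := by
    intro c hcS hchain hcne
    haveI : Nonempty c := hcne.to_subtype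
    have hdir : DirectedOn (· ⊇ ·) c := by
      intro x hx y hy
      rcases hchain.total hx hy with h | h
      · exact ⟨x, hx, subset_rfl, h⟩
      · exact ⟨y, hy, h, subset_rfl⟩
    have hne : (⋂₀ c).Nonempty := by
      refine IsCompact.nonempty_sInter_of_directed_nonempty_isCompact_isClosed hdir
        (fun U hU => (hcS hU).2.1.1) (fun U hU => (hcS hU).2.2.isCompact)
        (fun U hU => (hcS hU).2.2)
    obtain ⟨J0, hJ0⟩ := hcne
    refine ⟨⋂₀ c, ⟨(Set.sInter_subset_of_mem hJ0).trans (hcS hJ0).1,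
      ⟨hne, ?_⟩, isClosed_sInter fun U hU => (hcS hU).2.2⟩, fun s hs => Set.sInter_subset_of_mem hs⟩
    intro x i hi
    exact Set.mem_sInter.2 fun J hJ => (hcS hJ).2.1.2 x i (Set.mem_sInter.1 hi J hJ)
  obtain ⟨M, hMsub, hMmin⟩ := zorn_superset_nonempty S hchain _ (hrange a ha)
  refine ⟨M, hMmin.prop.1, hMmin.prop.2.1, ?_⟩
  intro J hJM hJ
  obtain ⟨b, hb⟩ := hJ.1
  have hbI : b ∈ I := hMmin.prop.1 (hJM hb)
  have hrb : Set.range (· * b) ∈ S := by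
    refine ⟨?_, (hrange b hbI).2.1, (hrange b hbI).2.2⟩
    rintro _ ⟨x, rfl⟩; exact hMmin.prop.1 (hJM (hJ.2 x b hb))
  have hrbJ : Set.range (· * b) ⊆ J := by
    rintro _ ⟨x, rfl⟩; exact hJ.2 x b hb
  have hMr : M ⊆ Set.range (· * b) := hMmin.2 hrb (hrbJ.trans hJM)
  exact subset_antisymm hJM (hMr.trans hrbJ)

/-- A minimal left ideal equals `X * a` for any of its elements. -/
lemma minLeftIdeal_eq_range {L : Set X} (hL : IsMinLeftIdeal L) {a : X} (ha : a ∈ L) :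
    Set.range (· * a) = L := by
  refine hL.2 _ ?_ (range_isLeftIdeal a)
  rintro _ ⟨x, rfl⟩; exact hL.1.2 x a ha

/-- The image of a minimal left ideal under a right translation is a minimal left ideal. -/
lemma minLeftIdeal_image {L : Set X} (hL : IsMinLeftIdeal L) (x : X) :
    IsMinLeftIdeal ((· * x) '' L) := by
  constructor
  · constructor
    · obtain ⟨a, ha⟩ := hL.1.1
      exact ⟨a * x, a, ha, rfl⟩
    · rintro y _ ⟨l, hl, rfl⟩
      exact ⟨y * l, hL.1.2 y l hl, mul_assoc y l x⟩
  · intro J hJ hJid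
    obtain ⟨j, hj⟩ := hJid.1
    obtain ⟨l0, hl0, rfl⟩ := hJ hj
    have hJ' : IsLeftIdeal {l ∈ L | l * x ∈ J} := by
      refine ⟨⟨l0, hl0, hj⟩, ?_⟩
      intro y i hi
      refine ⟨hL.1.2 y i hi.1, ?_⟩
      rw [mul_assoc]
      exact hJid.2 y _ hi.2
    have := hL.2 _ (Set.sep_subset L _) hJ'
    refine subset_antisymm hJ ?_
    rintro _ ⟨l, hl, rfl⟩
    have hmem : l ∈ {l ∈ L | l * x ∈ J} := by rw [this]; exact hl
    exact hmem.2

/-- In a minimal left ideal, an element fixed on the left by an idempotent `u`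
has a right inverse relative to `u`. -/
lemma exists_right_inv {L : Set X} (hL : IsMinLeftIdeal L) {u a : X} (hu : u ∈ L)
    (huu : u * u = u) (ha : a ∈ L) (hua : u * a = a) : ∃ y, a * y = u := by
  have key : ∀ t ∈ L, ∀ s ∈ L, ∃ x, x * s = t := by
    intro t ht s hs
    have := minLeftIdeal_eq_range hL hs
    rw [← this] at ht
    exact ht
  obtain ⟨x, hx⟩ := key u hu a ha
  obtain ⟨b, hbL, hub, hba⟩ : ∃ b ∈ L, u * b = b ∧ b * a = u := by
    refine ⟨u * (x * u), hL.1.2 u _ (hL.1.2 x u hu), by rw [← mul_assoc, huu], ?_⟩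
    have h1 : u * (x * u) * a = u * (x * (u * a)) := by simp only [mul_assoc]
    rw [h1, hua, hx, huu]
  obtain ⟨c, hc⟩ := key u hu b hbL
  refine ⟨b, ?_⟩
  calc a * b = u * (a * b) := by rw [← mul_assoc, hua]
    _ = (c * b) * (a * b) := by rw [hc]
    _ = c * ((b * a) * b) := by simp only [mul_assoc]
    _ = c * (u * b) := by rw [hba]
    _ = c * b := by rw [hub]
    _ = u := hc

/-- If `u` is an idempotent in a minimal left ideal, then `u * X` is a minimal right ideal. -/
lemma minRightIdeal_of_idem {L : Set X} (hL : IsMinLeftIdeal L) {u : X} (hu : u ∈ L)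
    (huu : u * u = u) : IsMinRightIdeal (Set.range (u * ·)) := by
  constructor
  · refine ⟨⟨u * u, u, rfl⟩, ?_⟩
    rintro _ ⟨x, rfl⟩ y
    exact ⟨x * y, (mul_assoc u x y).symm⟩
  · intro S hS hSid
    obtain ⟨s, hs⟩ := hSid.1
    obtain ⟨x, hx⟩ := hS hs
    have hus : u * s = s := by rw [← hx, ← mul_assoc, huu]
    have haL : s * u ∈ L := hL.1.2 s u hu
    have hua : u * (s * u) = s * u := by rw [← mul_assoc, hus]
    obtain ⟨y, hy⟩ := exists_right_inv hL hu huu haL hua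
    have heq : s * (u * y) = u := by rw [← mul_assoc]; exact hy
    have huS : u ∈ S := heq ▸ hSid.2 s hs (u * y)
    refine subset_antisymm hS ?_
    rintro _ ⟨z, rfl⟩
    exact hSid.2 u huS z

end Aux

/-- The union of all minimal left ideals is the minimal two-sided ideal, and it equals
the union of all minimal right ideals. -/
theorem stmt8 [Semigroup X] [Nonempty X] [TopologicalSpace X] [CompactSpace X] [T2Space X]
    (hX : ∀ a : X, Continuous fun x : X => x * a) :
    IsSemigroupIdeal (⋃₀ {L : Set X | IsMinLeftIdeal L}) ∧
    (∀ J : Set X, IsSemigroupIdeal J → ⋃₀ {L : Set X | IsMinLeftIdeal L} ⊆ J) ∧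
    ⋃₀ {L : Set X | IsMinLeftIdeal L} = ⋃₀ {R : Set X | IsMinRightIdeal R} := by
  set K := ⋃₀ {L : Set X | IsMinLeftIdeal L} with hKdef
  have hunivLI : IsLeftIdeal (Set.univ : Set X) := ⟨Set.univ_nonempty, fun _ _ _ => trivial⟩
  obtain ⟨L0, -, hL0⟩ := exists_minLeftIdeal_subset hX hunivLI
  obtain ⟨p0, hp0⟩ := hL0.1.1
  have hKne : K.Nonempty := ⟨p0, L0, hL0, hp0⟩
  have hKleft : IsLeftIdeal K := by
    refine ⟨hKne, ?_⟩
    intro x i hi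
    obtain ⟨L, hL, hiL⟩ := hi
    exact ⟨L, hL, hL.1.2 x i hiL⟩
  have hKright : IsRightIdeal K := by
    refine ⟨hKne, ?_⟩
    intro i hi x
    obtain ⟨L, hL, hiL⟩ := hi
    exact ⟨(· * x) '' L, minLeftIdeal_image hL x, i, hiL, rfl⟩
  refine ⟨⟨hKleft, hKright⟩, ?_, ?_⟩
  · -- K is contained in every two-sided ideal
    intro J hJ p hp
    obtain ⟨L, hL, hpL⟩ := hp
    obtain ⟨j, hj⟩ := hJ.1.1
    obtain ⟨l, hl⟩ := hL.1.1
    have hLJ : IsLeftIdeal (L ∩ J) := by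
      refine ⟨⟨j * l, hL.1.2 j l hl, hJ.2.2 j hj l⟩, ?_⟩
      intro x i hi
      exact ⟨hL.1.2 x i hi.1, hJ.1.2 x i hi.2⟩
    have := hL.2 _ Set.inter_subset_left hLJ
    have hLsubJ : L ⊆ J := by rw [← this]; exact Set.inter_subset_right
    exact hLsubJ hpL
  · -- K equals the union of all minimal right ideals
    apply subset_antisymm
    · intro p hp
      obtain ⟨L, hL, hpL⟩ := hp
      -- find an idempotent u ∈ L with u * p = p
      have hLclosed : IsClosed L := by
        rw [← minLeftIdeal_eq_range hL hpL]
        exact (isCompact_range (hX p)).isClosed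
      set B := L ∩ (fun x : X => x * p) ⁻¹' {p} with hBdef
      have hBne : B.Nonempty := by
        have hsub : (· * p) '' L ⊆ L := by
          rintro _ ⟨l, hlL, rfl⟩
          exact hL.1.2 l p hpL
        have himg : (· * p) '' L = L := hL.2 _ hsub (minLeftIdeal_image hL p).1
        have hmem : p ∈ (· * p) '' L := by rw [himg]; exact hpL
        obtain ⟨b, hbL, hbp⟩ := hmem
        exact ⟨b, hbL, hbp⟩
      have hBclosed : IsClosed B := hLclosed.inter (isClosed_singleton.preimage (hX p))
      have hBmul : ∀ a ∈ B, ∀ b ∈ B, a * b ∈ B := by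
        rintro a ⟨haL, hap⟩ b ⟨hbL, hbp⟩
        refine ⟨hL.1.2 a b hbL, ?_⟩
        simp only [Set.mem_preimage, Set.mem_singleton_iff] at hap hbp ⊢
        rw [mul_assoc, hbp, hap]
      obtain ⟨u, huB, huu⟩ := exists_idempotent_in_compact_subsemigroup
        (fun r => hX r) B hBne hBclosed.isCompact hBmul
      have huL : u ∈ L := huB.1
      have hup : u * p = p := huB.2
      exact ⟨Set.range (u * ·), minRightIdeal_of_idem hL huL huu, p, hup⟩
    · intro r hr
      obtain ⟨R, hR, hrR⟩ := hr
      obtain ⟨k, hk⟩ := hKne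
      obtain ⟨r0, hr0⟩ := hR.1.1
      have hRK : IsRightIdeal (R ∩ K) := by
        refine ⟨⟨r0 * k, hR.1.2 r0 hr0 k, hKleft.2 r0 k hk⟩, ?_⟩
        intro s hs x
        exact ⟨hR.1.2 s hs.1 x, hKright.2 s hs.2 x⟩
      have := hR.2 _ Set.inter_subset_left hRK
      have hRsubK : R ⊆ K := by rw [← this]; exact Set.inter_subset_right
      exact hRsubK hrR
end

section
/- Let X be a nonempty left-continuous compact Hausdorff semigroup. Then the following are equivalent: (1) X has a unique minimal left ideal; (2) a subset of X is a minimal right ideal of X if and only if it is an Ellis subgroup of X; (3) there exists a minimal left ideal of X which is also a right ideal of X. -/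
open Pointwise

variable {X : Type*}

/-- An Ellis subgroup of `X`: a set of the form `u * I` for a minimal left ideal `I`
and an idempotent `u ∈ I`. -/
def IsEllisSubgroup [Mul X] (E : Set X) : Prop :=
  ∃ I : Set X, IsMinLeftIdeal I ∧ ∃ u ∈ I, u * u = u ∧ E = {u} * I

set_option linter.unusedSectionVars false

section Helpers

variable [Semigroup X] [Nonempty X] [TopologicalSpace X] [CompactSpace X] [T2Space X]

lemma ellis_range_mul_eq {I : Set X} (hI : IsMinLeftIdeal I) {p : X} (hp : p ∈ I) :
    Set.range (fun x : X => x * p) = I := by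
  apply hI.2
  · rintro _ ⟨x, rfl⟩
    exact hI.1.2 x p hp
  · refine ⟨⟨Classical.arbitrary X * p, ⟨_, rfl⟩⟩, ?_⟩
    rintro x _ ⟨z, rfl⟩
    exact ⟨x * z, by simp [mul_assoc]⟩

lemma ellis_isClosed (hX : ∀ a : X, Continuous fun x : X => x * a)
    {I : Set X} (hI : IsMinLeftIdeal I) : IsClosed I := by
  obtain ⟨p, hp⟩ := hI.1.1
  rw [← ellis_range_mul_eq hI hp]
  exact (isCompact_range (hX p)).isClosed

lemma ellis_exists_minLeftIdeal (hX : ∀ a : X, Continuous fun x : X => x * a) :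
    ∃ I : Set X, IsMinLeftIdeal I := by
  have hchain : ∀ c ⊆ {I : Set X | IsLeftIdeal I ∧ IsClosed I}, IsChain (· ⊆ ·) c →
      c.Nonempty → ∃ lb ∈ {I : Set X | IsLeftIdeal I ∧ IsClosed I}, ∀ s ∈ c, lb ⊆ s := by
    intro c hcS hc hcne
    haveI : Nonempty c := hcne.to_subtype
    refine ⟨⋂₀ c, ⟨⟨?_, ?_⟩, isClosed_sInter fun U hU => (hcS hU).2⟩, fun s hs => Set.sInter_subset_of_mem hs⟩
    · apply IsCompact.nonempty_sInter_of_directed_nonempty_isCompact_isClosed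
      · intro a ha b hb
        rcases hc.total ha hb with h | h
        · exact ⟨a, ha, le_refl _, h⟩
        · exact ⟨b, hb, h, le_refl _⟩
      · exact fun U hU => (hcS hU).1.1
      · exact fun U hU => ((hcS hU).2).isCompact
      · exact fun U hU => (hcS hU).2
    · intro x i hi
      exact Set.mem_sInter.2 fun U hU => (hcS hU).1.2 x i (Set.mem_sInter.1 hi U hU)
  obtain ⟨M, -, hMmem, hMmin⟩ :=
    zorn_superset_nonempty {I : Set X | IsLeftIdeal I ∧ IsClosed I} hchain Set.univ
      ⟨⟨Set.univ_nonempty, fun _ _ _ => trivial⟩, isClosed_univ⟩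
  · refine ⟨M, hMmem.1, ?_⟩
    intro J hJM hJ
    obtain ⟨p, hp⟩ := hJ.1
    have hKsub : Set.range (fun x : X => x * p) ⊆ J := by
      rintro _ ⟨x, rfl⟩
      exact hJ.2 x p hp
    have hKmem : Set.range (fun x : X => x * p) ∈ {I : Set X | IsLeftIdeal I ∧ IsClosed I} := by
      refine ⟨⟨⟨Classical.arbitrary X * p, ⟨_, rfl⟩⟩, ?_⟩, (isCompact_range (hX p)).isClosed⟩
      rintro x _ ⟨z, rfl⟩
      exact ⟨x * z, by simp [mul_assoc]⟩
    have hMK : M ⊆ Set.range (fun x : X => x * p) :=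
      hMmin hKmem (hKsub.trans hJM)
    exact Set.Subset.antisymm hJM (hMK.trans hKsub)

/-- I * x is a minimal left ideal -/
lemma ellis_image_min {I : Set X} (hI : IsMinLeftIdeal I) (x : X) :
    IsMinLeftIdeal ((fun i => i * x) '' I) := by
  obtain ⟨p, hp⟩ := hI.1.1
  constructor
  · refine ⟨⟨p * x, ⟨p, hp, rfl⟩⟩, ?_⟩
    rintro z _ ⟨i, hi, rfl⟩
    exact ⟨z * i, hI.1.2 z i hi, by simp [mul_assoc]⟩
  · rintro J hJ hJideal
    obtain ⟨j, hj⟩ := hJideal.1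
    obtain ⟨i, hi, rfl⟩ := hJ hj
    apply Set.Subset.antisymm hJ
    rintro _ ⟨y, hy, rfl⟩
    have : y ∈ Set.range (fun z : X => z * i) := by rw [ellis_range_mul_eq hI hi]; exact hy
    obtain ⟨z, rfl⟩ := this
    have : z * (i * x) ∈ J := hJideal.2 z _ hj
    simpa [mul_assoc] using this

/-- an idempotent fixing s from the left, inside I -/
lemma ellis_exists_idem_fix (hX : ∀ a : X, Continuous fun x : X => x * a)
    {I : Set X} (hI : IsMinLeftIdeal I) {s : X} (hs : s ∈ I) :
    ∃ u ∈ I, u * u = u ∧ u * s = s := by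
  have hIs : (fun i => i * s) '' I = I := by
    apply hI.2
    · rintro _ ⟨i, hi, rfl⟩
      exact hI.1.2 i s hs
    · obtain ⟨p, hp⟩ := hI.1.1
      refine ⟨⟨p * s, ⟨p, hp, rfl⟩⟩, ?_⟩
      rintro x _ ⟨i, hi, rfl⟩
      exact ⟨x * i, hI.1.2 x i hi, by simp [mul_assoc]⟩
  have hsmem : s ∈ (fun i => i * s) '' I := hIs.symm ▸ hs
  obtain ⟨y, hy, hys⟩ := hsmem
  set T := {x ∈ I | x * s = s} with hT
  have hTne : T.Nonempty := ⟨y, hy, hys⟩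
  have hTclosed : IsClosed T :=
    (ellis_isClosed hX hI).inter (isClosed_singleton.preimage (hX s))
  have hTmul : ∀ x ∈ T, ∀ z ∈ T, x * z ∈ T := by
    rintro x ⟨hxI, hxs⟩ z ⟨hzI, hzs⟩
    exact ⟨hI.1.2 x z hzI, by rw [mul_assoc, hzs, hxs]⟩
  obtain ⟨u, huT, huu⟩ :=
    exists_idempotent_in_compact_subsemigroup (fun r => hX r) T hTne hTclosed.isCompact hTmul
  exact ⟨u, huT.1, huu, huT.2⟩

omit [Nonempty X] [TopologicalSpace X] [CompactSpace X] [T2Space X] in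
lemma ellis_mem_E {u : X} {I : Set X} {x : X} :
    x ∈ ({u} : Set X) * I ↔ ∃ i ∈ I, u * i = x := by
  simp [Set.mem_mul]

lemma ellis_left_id {u : X} {I : Set X} (huu : u * u = u) {e : X}
    (he : e ∈ ({u} : Set X) * I) : u * e = e := by
  obtain ⟨i, _, rfl⟩ := ellis_mem_E.1 he
  rw [← mul_assoc, huu]

lemma ellis_E_subset {u : X} {I : Set X} (hI : IsMinLeftIdeal I) :
    ({u} : Set X) * I ⊆ I := by
  intro e he
  obtain ⟨i, hi, rfl⟩ := ellis_mem_E.1 he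
  exact hI.1.2 u i hi

/-- two-sided inverses in the Ellis group -/
lemma ellis_exists_inv {I : Set X} (hI : IsMinLeftIdeal I) {u : X} (hu : u ∈ I)
    (huu : u * u = u) {s : X} (hs : s ∈ ({u} : Set X) * I) :
    ∃ t ∈ ({u} : Set X) * I, t * s = u ∧ s * t = u := by
  have hEsub : ({u} : Set X) * I ⊆ I := ellis_E_subset hI
  have hmulE : ∀ a ∈ ({u} : Set X) * I, ∀ b ∈ ({u} : Set X) * I, a * b ∈ ({u} : Set X) * I := by
    rintro a ha b hb
    obtain ⟨i, hi, rfl⟩ := ellis_mem_E.1 ha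
    exact ellis_mem_E.2 ⟨i * b, hI.1.2 i b (hEsub hb), (mul_assoc u i b).symm⟩
  -- left inverse for any element of E
  have hleft : ∀ a ∈ ({u} : Set X) * I, ∃ t ∈ ({u} : Set X) * I, t * a = u := by
    intro a ha
    have haI : a ∈ I := hEsub ha
    have : u ∈ Set.range (fun x : X => x * a) := by rw [ellis_range_mul_eq hI haI]; exact hu
    obtain ⟨y, hy⟩ := this
    replace hy : y * a = u := hy
    refine ⟨u * (y * u), ellis_mem_E.2 ⟨y * u, hI.1.2 y u hu, rfl⟩, ?_⟩
    have hua : u * a = a := ellis_left_id huu ha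
    calc u * (y * u) * a = u * (y * (u * a)) := by simp [mul_assoc]
      _ = u * (y * a) := by rw [hua]
      _ = u * u := by rw [hy]
      _ = u := huu
  obtain ⟨t, htE, hts⟩ := hleft s hs
  obtain ⟨r, hrE, hrt⟩ := hleft t htE
  refine ⟨t, htE, hts, ?_⟩
  have hst : s * t ∈ ({u} : Set X) * I := hmulE s hs t htE
  have hut : u * t = t := ellis_left_id huu htE
  calc s * t = u * (s * t) := (ellis_left_id huu hst).symm
    _ = (r * t) * (s * t) := by rw [hrt]
    _ = r * ((t * s) * t) := by simp [mul_assoc]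
    _ = r * (u * t) := by rw [hts]
    _ = r * t := by rw [hut]
    _ = u := hrt

lemma ellis_minLeft_eq_of_inter {I J : Set X} (hI : IsMinLeftIdeal I) (hJ : IsMinLeftIdeal J)
    (h : (I ∩ J).Nonempty) : I = J := by
  have hideal : IsLeftIdeal (I ∩ J) :=
    ⟨h, fun x i hi => ⟨hI.1.2 x i hi.1, hJ.1.2 x i hi.2⟩⟩
  exact (hI.2 _ Set.inter_subset_left hideal).symm.trans (hJ.2 _ Set.inter_subset_right hideal)

end Helpers

/-- For a nonempty left-continuous compact Hausdorff semigroup the following are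
equivalent: (1) there is a unique minimal left ideal; (2) the minimal right ideals
are precisely the Ellis subgroups; (3) some minimal left ideal is a right ideal. -/
theorem stmt11 [Semigroup X] [Nonempty X] [TopologicalSpace X] [CompactSpace X] [T2Space X]
    (hX : ∀ a : X, Continuous fun x : X => x * a) :
    ((∃! I : Set X, IsMinLeftIdeal I) ↔
      (∀ S : Set X, IsMinRightIdeal S ↔ IsEllisSubgroup S)) ∧
    ((∀ S : Set X, IsMinRightIdeal S ↔ IsEllisSubgroup S) ↔
      (∃ I : Set X, IsMinLeftIdeal I ∧ IsRightIdeal I)) := by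
  have hP1P3 : (∃! I : Set X, IsMinLeftIdeal I) →
      ∃ I : Set X, IsMinLeftIdeal I ∧ IsRightIdeal I := by
    rintro ⟨I, hI, huniq⟩
    refine ⟨I, hI, hI.1.1, ?_⟩
    intro r hr x
    have heq : (fun i => i * x) '' I = I := huniq _ (ellis_image_min hI x)
    rw [← heq]; exact ⟨r, hr, rfl⟩
  have hP3P1 : (∃ I : Set X, IsMinLeftIdeal I ∧ IsRightIdeal I) →
      (∃! I : Set X, IsMinLeftIdeal I) := by
    rintro ⟨I, hI, hR⟩
    refine ⟨I, hI, ?_⟩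
    intro J hJ
    obtain ⟨q, hq⟩ := hJ.1.1
    obtain ⟨p, hp⟩ := hI.1.1
    exact ellis_minLeft_eq_of_inter hJ hI ⟨p * q, hJ.1.2 p q hq, hR.2 p hp q⟩
  have hP1P2 : (∃! I : Set X, IsMinLeftIdeal I) →
      ∀ S : Set X, IsMinRightIdeal S ↔ IsEllisSubgroup S := by
    rintro hU S
    obtain ⟨I, hI, huniq⟩ := hU
    have hIright : IsRightIdeal I := by
      refine ⟨hI.1.1, fun r hr x => ?_⟩
      have heq : (fun i => i * x) '' I = I := huniq _ (ellis_image_min hI x)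
      rw [← heq]; exact ⟨r, hr, rfl⟩
    have hEllis : ∀ E : Set X, IsEllisSubgroup E → IsMinRightIdeal E := by
      rintro E ⟨J, hJ, u, huJ, huu, rfl⟩
      obtain rfl : J = I := huniq _ hJ
      have hEright : IsRightIdeal ({u} * J : Set X) := by
        refine ⟨⟨u, ellis_mem_E.2 ⟨u, huJ, huu⟩⟩, ?_⟩
        rintro r hr x
        obtain ⟨i, hi, rfl⟩ := ellis_mem_E.1 hr
        exact ellis_mem_E.2 ⟨i * x, hIright.2 i hi x, by simp [mul_assoc]⟩
      refine ⟨hEright, ?_⟩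
      intro S hSsub hSideal
      apply Set.Subset.antisymm hSsub
      obtain ⟨s, hsS⟩ := hSideal.1
      obtain ⟨t, htE, hts, hst⟩ := ellis_exists_inv hJ huJ huu (hSsub hsS)
      have huS : u ∈ S := hst ▸ hSideal.2 s hsS t
      intro e heE
      have := hSideal.2 u huS e
      rwa [ellis_left_id huu heE] at this
    constructor
    · intro hS
      obtain ⟨s0, hs0⟩ := hS.1.1
      obtain ⟨p, hp⟩ := hI.1.1
      have hSI : S ⊆ I := by
        have hideal : IsRightIdeal (S ∩ I) :=
          ⟨⟨s0 * p, hS.1.2 s0 hs0 p, hI.1.2 s0 p hp⟩,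
            fun r hr x => ⟨hS.1.2 r hr.1 x, hIright.2 r hr.2 x⟩⟩
        have h := hS.2 _ Set.inter_subset_left hideal
        rw [← h]; exact Set.inter_subset_right
      obtain ⟨u, huI, huu, hus⟩ := ellis_exists_idem_fix hX hI (hSI hs0)
      have hEellis : IsEllisSubgroup ({u} * I : Set X) := ⟨I, hI, u, huI, huu, rfl⟩
      have hEmin := hEllis _ hEellis
      have hsE : s0 ∈ ({u} : Set X) * I := ellis_mem_E.2 ⟨s0, hSI hs0, hus⟩
      have hideal : IsRightIdeal (S ∩ ({u} * I)) :=
        ⟨⟨s0, hs0, hsE⟩, fun r hr x => ⟨hS.1.2 r hr.1 x, hEmin.1.2 r hr.2 x⟩⟩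
      have h1 : S ∩ ({u} * I) = S := hS.2 _ Set.inter_subset_left hideal
      have h2 : S ∩ ({u} * I) = {u} * I := hEmin.2 _ Set.inter_subset_right hideal
      rw [← h1.symm.trans h2] at hEellis
      exact hEellis
    · exact hEllis S
  have hP2P1 : (∀ S : Set X, IsMinRightIdeal S ↔ IsEllisSubgroup S) →
      (∃! I : Set X, IsMinLeftIdeal I) := by
    intro h2
    obtain ⟨I, hI⟩ := ellis_exists_minLeftIdeal hX
    obtain ⟨p, hp⟩ := hI.1.1
    obtain ⟨u, huI, huu, -⟩ := ellis_exists_idem_fix hX hI hp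
    have hEmin : IsMinRightIdeal ({u} * I : Set X) := (h2 _).2 ⟨I, hI, u, huI, huu, rfl⟩
    refine ⟨I, hI, ?_⟩
    intro J hJ
    obtain ⟨q, hq⟩ := hJ.1.1
    have huE : u ∈ ({u} : Set X) * I := ellis_mem_E.2 ⟨u, huI, huu⟩
    have h4 : u * q ∈ I := ellis_E_subset hI (hEmin.1.2 u huE q)
    exact ellis_minLeft_eq_of_inter hJ hI ⟨u * q, hJ.1.2 u q hq, h4⟩
  exact ⟨⟨hP1P2, hP2P1⟩, ⟨fun h2 => hP1P3 (hP2P1 h2), fun h3 => hP1P2 (hP3P1 h3)⟩⟩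
end

section
/- Let B be a Boolean algebra, let S be a Boolean subalgebra of B, and let b ∈ S. Suppose a ∈ B satisfies: for every c ∈ S with c ≠ ⊥, both a ⊓ c ≠ ⊥ and c \ a ≠ ⊥. Then the symmetric difference a Δ b satisfies the same property: for every c ∈ S with c ≠ ⊥, both (a Δ b) ⊓ c ≠ ⊥ and c \ (a Δ b) ≠ ⊥. -/
/-- If `a` splits every nonzero element of a Boolean subalgebra `S` of a Boolean
algebra `B` (i.e. `a ⊓ c ≠ ⊥` and `c \ a ≠ ⊥` for each nonzero `c ∈ S`), then for
any `b ∈ S` the symmetric difference `a Δ b` has the same splitting property. -/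
theorem stmt14 {B : Type*} [BooleanAlgebra B] (S : Set B)
    (hbot : ⊥ ∈ S) (htop : ⊤ ∈ S)
    (hinf : ∀ x ∈ S, ∀ y ∈ S, x ⊓ y ∈ S)
    (hsup : ∀ x ∈ S, ∀ y ∈ S, x ⊔ y ∈ S)
    (hcompl : ∀ x ∈ S, xᶜ ∈ S)
    (a b : B) (hb : b ∈ S)
    (ha : ∀ c ∈ S, c ≠ ⊥ → a ⊓ c ≠ ⊥ ∧ c \ a ≠ ⊥) :
    ∀ c ∈ S, c ≠ ⊥ → (symmDiff a b) ⊓ c ≠ ⊥ ∧ c \ (symmDiff a b) ≠ ⊥ := by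
  intro c hc hcne
  have h1le : a ⊓ b ≤ (symmDiff a b)ᶜ :=
    le_compl_iff_disjoint_left.mpr (disjoint_symmDiff_inf a b)
  have h2le : aᶜ ⊓ bᶜ ≤ (symmDiff a b)ᶜ := by
    rw [← compl_sup]; exact compl_le_compl symmDiff_le_sup
  by_cases hcb : c ⊓ b = ⊥
  · obtain ⟨h1, h2⟩ := ha c hc hcne
    have hcle : c ≤ bᶜ := le_compl_iff_disjoint_right.mpr (disjoint_iff.mpr hcb)
    constructor
    · refine fun h => h1 (le_bot_iff.mp (h ▸ ?_))
      refine le_inf ?_ inf_le_right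
      calc a ⊓ c ≤ a ⊓ bᶜ := inf_le_inf_left a hcle
      _ = a \ b := (sdiff_eq).symm
      _ ≤ symmDiff a b := le_sup_left
    · refine fun h => h2 (le_bot_iff.mp (h ▸ ?_))
      show c \ a ≤ c \ symmDiff a b
      rw [sdiff_eq, sdiff_eq]
      exact le_inf inf_le_left
        ((le_inf inf_le_right (le_trans inf_le_left hcle)).trans h2le)
  · obtain ⟨h1, h2⟩ := ha (c ⊓ b) (hinf c hc b hb) hcb
    constructor
    · refine fun h => h2 (le_bot_iff.mp (h ▸ ?_))
      show (c ⊓ b) \ a ≤ symmDiff a b ⊓ c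
      rw [sdiff_eq]
      refine le_inf ?_ (le_trans inf_le_left inf_le_left)
      calc c ⊓ b ⊓ aᶜ ≤ b ⊓ aᶜ := inf_le_inf_right _ inf_le_right
      _ = b \ a := (sdiff_eq).symm
      _ ≤ symmDiff a b := le_sup_right
    · refine fun h => h1 (le_bot_iff.mp (h ▸ ?_))
      show a ⊓ (c ⊓ b) ≤ c \ symmDiff a b
      rw [sdiff_eq]
      exact le_inf (le_trans inf_le_right inf_le_left)
        ((le_inf inf_le_left (le_trans inf_le_right inf_le_right)).trans h1le)
end

section
/- Let X be a nonempty left-continuous compact Hausdorff semigroup and let M be a minimal left ideal of X. Then M * X equals the union of all minimal left ideals of X. -/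
open Pointwise

variable {X : Type*}

lemma minLeftIdeal_image_mul [Semigroup X] (M : Set X) (hM : IsMinLeftIdeal M) (x : X) :
    IsMinLeftIdeal ((fun m => m * x) '' M) := by
  constructor
  · constructor
    · exact hM.1.1.image _
    · rintro y i ⟨m, hm, rfl⟩
      exact ⟨y * m, hM.1.2 y m hm, by simp [mul_assoc]⟩
  · intro J hJ hJi
    have hJ' : IsLeftIdeal {m ∈ M | m * x ∈ J} := by
      constructor
      · obtain ⟨j, hj⟩ := hJi.1
        obtain ⟨m, hm, rfl⟩ := hJ hj
        exact ⟨m, hm, hj⟩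
      · rintro y m ⟨hm, hmx⟩
        refine ⟨hM.1.2 y m hm, ?_⟩
        rw [mul_assoc]
        exact hJi.2 y _ hmx
    have := hM.2 _ (Set.sep_subset _ _) hJ'
    apply Set.Subset.antisymm hJ
    rintro i ⟨m, hm, rfl⟩
    rw [← this] at hm
    exact hm.2

/-- For a minimal left ideal `M` of a nonempty left-continuous compact Hausdorff
semigroup, `M * X` equals the union of all minimal left ideals. -/
theorem stmt15 [Semigroup X] [Nonempty X] [TopologicalSpace X] [CompactSpace X] [T2Space X]
    (hX : ∀ a : X, Continuous fun x : X => x * a)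
    (M : Set X) (hM : IsMinLeftIdeal M) :
    M * (Set.univ : Set X) = ⋃₀ {L : Set X | IsMinLeftIdeal L} := by
  ext a
  simp only [Set.mem_sUnion, Set.mem_setOf_eq, Set.mem_mul]
  constructor
  · rintro ⟨m, hm, x, -, rfl⟩
    exact ⟨_, minLeftIdeal_image_mul M hM x, ⟨m, hm, rfl⟩⟩
  · rintro ⟨L, hL, ha⟩
    have hK : IsLeftIdeal ((fun m => m * a) '' M) := (minLeftIdeal_image_mul M hM a).1
    have hsub : (fun m => m * a) '' M ⊆ L := by
      rintro i ⟨m, hm, rfl⟩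
      exact hL.1.2 m a ha
    have := hL.2 _ hsub hK
    rw [← this] at ha
    obtain ⟨m, hm, hma⟩ := ha
    exact ⟨m, hm, a, trivial, hma⟩
end
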